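/- arXiv:2308.02391 — 5 statements merged into one kernel-verified Lean document; each statement's English description precedes it below -/
import Mathlib

section
/- Let N ≥ 1, λ > 0, and positive reals ρ_1,…,ρ_N. For S ∈ ℕ consider the product-form stationary measure of the closed network with S jobs: for x ∈ ℕ^{N+1} with x_0 + x_1 + ⋯ + x_N = S, m^o(x) := (1/Z) · (1/λ)^{x_0} · ∏_{i=1}^N ρ_i^{x_i}, where Z is the normalizing constant. Define G(s) := ∑_{y∈ℕ^N, y_1+⋯+y_N=s} ∏_{i=1}^N ρ_i^{y_i} and μ(s) := G(s−1)/G(s). Then for every s ∈ {0,…,S}, the aggregated measure m(s) := ∑_{x : x_1+⋯+x_N = s, x_0 = S−s} m^o(x) equals (1/Z)·(1/λ)^{S−s}·G(s), and m satisfies the birth-and-death detailed balance equations λ·m(s) = μ(s+1)·m(s+1) for all 0 ≤ s < S; hence m is the stationary distribution of the birth-and-death process with birth rate λ (for s < S) and death rate μ(s). -/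
/-- Norton (flow-equivalent server) aggregation: the aggregated measure
of the closed network is the stationary measure of a birth-and-death process. -/
theorem stmt1 (N : ℕ) (hN : 1 ≤ N) (lam : ℝ) (hlam : 0 < lam)
    (ρ : Fin N → ℝ) (hρ : ∀ i, 0 < ρ i) (S : ℕ) (Z : ℝ) (hZ : 0 < Z)
    (mo : (Fin (N + 1) → ℕ) → ℝ)
    (hmo : ∀ x, mo x = (1 / Z) * (1 / lam) ^ x 0 * ∏ i : Fin N, ρ i ^ x i.succ)
    (G : ℕ → ℝ)
    (hG : ∀ s, G s = ∑ y ∈ Finset.Nat.antidiagonalTuple N s, ∏ i, ρ i ^ y i)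
    (μ : ℕ → ℝ) (hμ : ∀ s, 1 ≤ s → μ s = G (s - 1) / G s)
    (m : ℕ → ℝ)
    (hm : ∀ s, m s = ∑ x ∈ (Finset.Nat.antidiagonalTuple (N + 1) S).filter
        (fun x => x 0 = S - s ∧ ∑ i : Fin N, x i.succ = s), mo x) :
    (∀ s ≤ S, m s = (1 / Z) * (1 / lam) ^ (S - s) * G s) ∧
    (∀ s < S, lam * m s = μ (s + 1) * m (s + 1)) := by
  have hGpos : ∀ s, 0 < G s := by
    intro s
    rw [hG]
    apply Finset.sum_pos
    · intro y _
      exact Finset.prod_pos (fun i _ => pow_pos (hρ i) _)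
    · refine ⟨fun j => if j = (⟨0, hN⟩ : Fin N) then s else 0, ?_⟩
      rw [Finset.Nat.mem_antidiagonalTuple]
      simp
  have hkey : ∀ s ≤ S, m s = (1 / Z) * (1 / lam) ^ (S - s) * G s := by
    intro s hs
    rw [hm, hG, Finset.mul_sum]
    refine Finset.sum_nbij' (i := fun x => x ∘ Fin.succ)
      (j := fun y => Fin.cons (S - s) y) ?_ ?_ ?_ ?_ ?_
    · intro x hx
      simp only [Finset.mem_filter, Finset.Nat.mem_antidiagonalTuple] at hx ⊢
      exact hx.2.2
    · intro y hy
      simp only [Finset.Nat.mem_antidiagonalTuple] at hy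
      simp only [Finset.mem_filter, Finset.Nat.mem_antidiagonalTuple]
      refine ⟨?_, by simp, ?_⟩
      · rw [Fin.sum_univ_succ]
        simp [Fin.cons_succ, hy, Nat.sub_add_cancel hs]
      · simp [Fin.cons_succ, hy]
    · intro x hx
      simp only [Finset.mem_filter] at hx
      funext j
      refine Fin.cases ?_ ?_ j
      · simp [hx.2.1]
      · intro k; simp
    · intro y hy
      funext j
      simp
    · intro x hx
      simp only [Finset.mem_filter] at hx
      rw [hmo, hx.2.1]
      ring_nf
      rfl
  refine ⟨hkey, fun s hsS => ?_⟩
  rw [hkey s (le_of_lt hsS), hkey (s + 1) hsS, hμ (s + 1) (by omega)]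
  have h1 : (s + 1 : ℕ) - 1 = s := by omega
  have h2 : S - s = (S - (s + 1)) + 1 := by omega
  rw [h1, h2, pow_succ]
  have hG1 : G (s + 1) ≠ 0 := (hGpos (s + 1)).ne'
  field_simp
end

section
/- Let P and P' be n×n row-stochastic matrices and r : Fin n → ℝ. Suppose there is B ≥ 0 such that span(∑_{t=0}^{T'} P^t r) ≤ B for every T' ≥ 0. Then for every T ≥ 0, ‖∑_{t=0}^{T} P^t r − ∑_{t=0}^{T} P'^t r‖_∞ ≤ (T+1) · B · ‖P − P'‖_∞. -/
open Matrix

/-- comparison of expected cumulative rewards of two Markov reward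
processes in terms of the span bound and the sup-row-L1 distance of the kernels. -/
theorem stmt8 (n : ℕ) (hn : 0 < n)
    (P P' : Matrix (Fin n) (Fin n) ℝ)
    (hPnn : ∀ i j, 0 ≤ P i j) (hProw : ∀ i, ∑ j, P i j = 1)
    (hP'nn : ∀ i j, 0 ≤ P' i j) (hP'row : ∀ i, ∑ j, P' i j = 1)
    (r : Fin n → ℝ) (B : ℝ) (hB : 0 ≤ B)
    (hspan : ∀ T' : ℕ,
      Finset.univ.sup' (Finset.univ_nonempty_iff.mpr ⟨⟨0, hn⟩⟩)
          (∑ t ∈ Finset.range (T' + 1), (P ^ t *ᵥ r)) -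
        Finset.univ.inf' (Finset.univ_nonempty_iff.mpr ⟨⟨0, hn⟩⟩)
          (∑ t ∈ Finset.range (T' + 1), (P ^ t *ᵥ r)) ≤ B) :
    ∀ T : ℕ,
      Finset.univ.sup' (Finset.univ_nonempty_iff.mpr ⟨⟨0, hn⟩⟩)
        (fun i => |(∑ t ∈ Finset.range (T + 1), (P ^ t *ᵥ r)) i -
          (∑ t ∈ Finset.range (T + 1), (P' ^ t *ᵥ r)) i|) ≤
      ((T : ℝ) + 1) * B *
        Finset.univ.sup' (Finset.univ_nonempty_iff.mpr ⟨⟨0, hn⟩⟩)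
          (fun i => ∑ j, |P i j - P' i j|) := by
  have hne : (Finset.univ : Finset (Fin n)).Nonempty := Finset.univ_nonempty_iff.mpr ⟨⟨0, hn⟩⟩
  set S : ℕ → Fin n → ℝ := fun T => ∑ t ∈ Finset.range (T+1), (P ^ t *ᵥ r) with hS
  set S' : ℕ → Fin n → ℝ := fun T => ∑ t ∈ Finset.range (T+1), (P' ^ t *ᵥ r) with hS'
  set K : ℝ := Finset.univ.sup' hne (fun i => ∑ j, |P i j - P' i j|) with hK
  have hKi : ∀ i, ∑ j, |P i j - P' i j| ≤ K := fun i => hK ▸ Finset.le_sup' (fun i => ∑ j, |P i j - P' i j|) (Finset.mem_univ i)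
  have hK0 : 0 ≤ K :=
    le_trans (Finset.sum_nonneg fun j _ => abs_nonneg _) (hKi ⟨0, hn⟩)
  have hrec : ∀ (Q : Matrix (Fin n) (Fin n) ℝ) (T : ℕ),
      (∑ t ∈ Finset.range (T+1+1), (Q ^ t *ᵥ r)) =
        r + Q *ᵥ (∑ t ∈ Finset.range (T+1), (Q ^ t *ᵥ r)) := by
    intro Q T
    rw [Finset.sum_range_succ']
    have : (Q *ᵥ ∑ t ∈ Finset.range (T+1), (Q ^ t *ᵥ r)) =
        ∑ t ∈ Finset.range (T+1), Q *ᵥ (Q ^ t *ᵥ r) := map_sum Q.mulVecLin _ _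
    rw [this]
    simp only [pow_succ', Matrix.mulVec_mulVec, pow_zero, Matrix.one_mulVec]
    abel
  -- key span lemma
  have hkey : ∀ T i, |∑ j, (P i j - P' i j) * S T j| ≤ B * K := by
    intro T i
    set m : ℝ := Finset.univ.inf' hne (S T) with hm
    have hsub : ∀ j, |S T j - m| ≤ B := by
      intro j
      rw [abs_of_nonneg (sub_nonneg.2 (Finset.inf'_le _ (Finset.mem_univ j)))]
      have h1 : S T j ≤ Finset.univ.sup' hne (S T) := Finset.le_sup' _ (Finset.mem_univ j)
      have := hspan T
      linarith
    have heq : ∑ j, (P i j - P' i j) * (S T j - m) = ∑ j, (P i j - P' i j) * S T j := by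
      have h : ∀ j, (P i j - P' i j) * (S T j - m) =
          (P i j - P' i j) * S T j - (P i j * m - P' i j * m) := fun j => by ring
      simp only [h, Finset.sum_sub_distrib, ← Finset.sum_mul, hProw, hP'row]
      ring
    rw [← heq]
    calc |∑ j, (P i j - P' i j) * (S T j - m)|
        ≤ ∑ j, |(P i j - P' i j) * (S T j - m)| := Finset.abs_sum_le_sum_abs _ _
      _ ≤ ∑ j, |P i j - P' i j| * B := by
          refine Finset.sum_le_sum fun j _ => ?_
          rw [abs_mul]
          exact mul_le_mul_of_nonneg_left (hsub j) (abs_nonneg _)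
      _ = (∑ j, |P i j - P' i j|) * B := by rw [Finset.sum_mul]
      _ ≤ K * B := mul_le_mul_of_nonneg_right (hKi i) hB
      _ = B * K := mul_comm _ _
  have main : ∀ T i, |S T i - S' T i| ≤ (T : ℝ) * B * K := by
    intro T
    induction T with
    | zero =>
      intro i
      simp [hS, hS']
    | succ T ih =>
      intro i
      have h1 : S (T+1) i = r i + ∑ j, P i j * S T j := by
        rw [hS]; simp only [hrec P T]; rfl
      have h2 : S' (T+1) i = r i + ∑ j, P' i j * S' T j := by
        rw [hS']; simp only [hrec P' T]; rfl
      have hd : S (T+1) i - S' (T+1) i =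
          (∑ j, P' i j * (S T j - S' T j)) + ∑ j, (P i j - P' i j) * S T j := by
        rw [h1, h2]
        simp only [mul_sub, sub_mul, Finset.sum_sub_distrib]
        ring
      rw [hd]
      calc |(∑ j, P' i j * (S T j - S' T j)) + ∑ j, (P i j - P' i j) * S T j|
          ≤ |∑ j, P' i j * (S T j - S' T j)| + |∑ j, (P i j - P' i j) * S T j| := abs_add_le _ _
        _ ≤ (∑ j, P' i j * ((T : ℝ) * B * K)) + B * K := by
            refine add_le_add ?_ (hkey T i)
            calc |∑ j, P' i j * (S T j - S' T j)|
                ≤ ∑ j, |P' i j * (S T j - S' T j)| := Finset.abs_sum_le_sum_abs _ _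
              _ ≤ ∑ j, P' i j * ((T : ℝ) * B * K) := by
                  refine Finset.sum_le_sum fun j _ => ?_
                  rw [abs_mul, abs_of_nonneg (hP'nn i j)]
                  exact mul_le_mul_of_nonneg_left (ih j) (hP'nn i j)
        _ = ((T : ℝ) + 1) * B * K := by
            rw [← Finset.sum_mul, hP'row]
            ring
      push_cast
      ring_nf
      exact le_refl _
  intro T
  refine Finset.sup'_le _ _ fun i _ => ?_
  have := main T i
  have hBK : 0 ≤ B * K := mul_nonneg hB hK0
  show |S T i - S' T i| ≤ ((T : ℝ) + 1) * B * K
  nlinarith [this]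
end

section
/- Let P and P' be n×n row-stochastic matrices and let r : Fin n → ℝ with 0 ≤ r(i) ≤ r_max. Suppose there is B ≥ 0 such that span(∑_{t=0}^{T} P^t r) ≤ B for every T ≥ 0, and suppose the Cesàro averages converge to constant vectors: (1/T)·∑_{t=0}^{T−1} P^t r → g·𝟙 and (1/T)·∑_{t=0}^{T−1} P'^t r → g'·𝟙 as T → ∞, for reals g and g'. Then |g − g'| ≤ B · ‖P − P'‖_∞. -/
open Matrix

/-- the difference of the gains of two Markov reward processes is bounded
by the span bound times the sup-row-L1 distance of the kernels. -/
theorem stmt9 (n : ℕ) (hn : 0 < n)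
    (P P' : Matrix (Fin n) (Fin n) ℝ)
    (hPnn : ∀ i j, 0 ≤ P i j) (hProw : ∀ i, ∑ j, P i j = 1)
    (hP'nn : ∀ i j, 0 ≤ P' i j) (hP'row : ∀ i, ∑ j, P' i j = 1)
    (r : Fin n → ℝ) (rmax : ℝ) (hr : ∀ i, 0 ≤ r i ∧ r i ≤ rmax)
    (B : ℝ) (hB : 0 ≤ B)
    (hspan : ∀ T : ℕ,
      Finset.univ.sup' (Finset.univ_nonempty_iff.mpr ⟨⟨0, hn⟩⟩)
          (∑ t ∈ Finset.range (T + 1), (P ^ t *ᵥ r)) -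
        Finset.univ.inf' (Finset.univ_nonempty_iff.mpr ⟨⟨0, hn⟩⟩)
          (∑ t ∈ Finset.range (T + 1), (P ^ t *ᵥ r)) ≤ B)
    (g g' : ℝ)
    (hg : Filter.Tendsto
      (fun T : ℕ => fun i => (1 / (T : ℝ)) * (∑ t ∈ Finset.range T, (P ^ t *ᵥ r)) i)
      Filter.atTop (nhds (fun _ => g)))
    (hg' : Filter.Tendsto
      (fun T : ℕ => fun i => (1 / (T : ℝ)) * (∑ t ∈ Finset.range T, (P' ^ t *ᵥ r)) i)
      Filter.atTop (nhds (fun _ => g'))) :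
    |g - g'| ≤ B *
      Finset.univ.sup' (Finset.univ_nonempty_iff.mpr ⟨⟨0, hn⟩⟩)
        (fun i => ∑ j, |P i j - P' i j|) := by
  have i0 : Fin n := ⟨0, hn⟩
  have ne : (Finset.univ : Finset (Fin n)).Nonempty := Finset.univ_nonempty_iff.mpr ⟨i0⟩
  set D : ℝ := Finset.univ.sup' (Finset.univ_nonempty_iff.mpr ⟨⟨0, hn⟩⟩)
      (fun i => ∑ j, |P i j - P' i j|) with hDdef
  set S : ℕ → Fin n → ℝ := fun T => ∑ t ∈ Finset.range T, (P ^ t *ᵥ r) with hSdef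
  set S' : ℕ → Fin n → ℝ := fun T => ∑ t ∈ Finset.range T, (P' ^ t *ᵥ r) with hS'def
  have hδ : ∀ i, ∑ j, |P i j - P' i j| ≤ D := fun i =>
    Finset.le_sup' (f := fun i => ∑ j, |P i j - P' i j|) (Finset.mem_univ i)
  have hD0 : 0 ≤ D :=
    le_trans (Finset.sum_nonneg fun j _ => abs_nonneg _) (hδ i0)
  -- span bound on partial sums
  have hspanS : ∀ T i j, S T i - S T j ≤ B := by
    intro T i j
    cases T with
    | zero => simp [hSdef, hB]
    | succ T =>
      have h1 := Finset.le_sup' (s := (Finset.univ : Finset (Fin n)))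
        (f := (∑ t ∈ Finset.range (T + 1), (P ^ t *ᵥ r))) (Finset.mem_univ i)
      have h2 := Finset.inf'_le (s := (Finset.univ : Finset (Fin n)))
        (f := (∑ t ∈ Finset.range (T + 1), (P ^ t *ᵥ r))) (Finset.mem_univ j)
      have := hspan T
      simp only [hSdef]
      linarith [h1, h2]
  -- key step bound
  have hstep : ∀ T i, |((P' - P) *ᵥ S T) i| ≤ B * D := by
    intro T i
    set m : ℝ := Finset.univ.inf' ne (S T) with hm
    obtain ⟨k, -, hk⟩ := Finset.exists_mem_eq_inf' ne (S T)
    have hle : ∀ j, 0 ≤ S T j - m ∧ S T j - m ≤ B := by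
      intro j
      constructor
      · have := Finset.inf'_le (f := S T) (Finset.mem_univ j)
        linarith
      · rw [hm, hk]
        exact hspanS T j k
    have hrow0 : ∑ j, (P' i j - P i j) = 0 := by
      rw [Finset.sum_sub_distrib, hP'row, hProw]; ring
    have heq : ((P' - P) *ᵥ S T) i = ∑ j, (P' i j - P i j) * (S T j - m) := by
      simp only [Matrix.mulVec, dotProduct, Matrix.sub_apply]
      rw [Finset.sum_congr rfl (fun j _ => by ring :
        ∀ j ∈ Finset.univ, (P' i j - P i j) * (S T j - m)
          = (P' i j - P i j) * S T j - (P' i j - P i j) * m)]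
      rw [Finset.sum_sub_distrib, ← Finset.sum_mul, hrow0]
      ring
    rw [heq]
    calc |∑ j, (P' i j - P i j) * (S T j - m)|
        ≤ ∑ j, |(P' i j - P i j) * (S T j - m)| := Finset.abs_sum_le_sum_abs _ _
      _ ≤ ∑ j, |P' i j - P i j| * B := by
          apply Finset.sum_le_sum
          intro j _
          rw [abs_mul]
          apply mul_le_mul_of_nonneg_left _ (abs_nonneg _)
          rw [abs_of_nonneg (hle j).1]
          exact (hle j).2
      _ = (∑ j, |P i j - P' i j|) * B := by
          rw [← Finset.sum_mul]
          congr 1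
          exact Finset.sum_congr rfl fun j _ => by rw [abs_sub_comm]
      _ ≤ D * B := mul_le_mul_of_nonneg_right (hδ i) hB
      _ = B * D := mul_comm _ _
  -- stochastic contraction for P'
  have hcon : ∀ (w : Fin n → ℝ) (C : ℝ), (∀ j, |w j| ≤ C) → ∀ i, |(P' *ᵥ w) i| ≤ C := by
    intro w C hw i
    have : |(P' *ᵥ w) i| ≤ ∑ j, |P' i j * w j| := by
      simp only [Matrix.mulVec, dotProduct]
      exact Finset.abs_sum_le_sum_abs _ _
    calc |(P' *ᵥ w) i| ≤ ∑ j, |P' i j * w j| := this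
      _ ≤ ∑ j, P' i j * C := by
          apply Finset.sum_le_sum
          intro j _
          rw [abs_mul, abs_of_nonneg (hP'nn i j)]
          exact mul_le_mul_of_nonneg_left (hw j) (hP'nn i j)
      _ = C := by rw [← Finset.sum_mul, hP'row, one_mul]
  -- recursion for partial sums
  have hrecP : ∀ (Q : Matrix (Fin n) (Fin n) ℝ) (T : ℕ),
      (∑ t ∈ Finset.range (T + 1), (Q ^ t *ᵥ r))
        = r + (Q *ᵥ ∑ t ∈ Finset.range T, (Q ^ t *ᵥ r)) := by
    intro Q T
    funext i
    rw [Finset.sum_apply]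
    rw [Finset.sum_range_succ']
    have h0 : (Q ^ 0 *ᵥ r) i = r i := by rw [pow_zero, Matrix.one_mulVec]
    have hsum : (Q *ᵥ ∑ t ∈ Finset.range T, (Q ^ t *ᵥ r))
        = ∑ t ∈ Finset.range T, (Q *ᵥ (Q ^ t *ᵥ r)) := by
      have := map_sum (Matrix.mulVecLin Q) (fun t => (Q ^ t *ᵥ r)) (Finset.range T)
      simp only [Matrix.mulVecLin_apply] at this
      exact this
    simp only [Pi.add_apply, hsum, Finset.sum_apply, h0]
    rw [add_comm]
    congr 1
    apply Finset.sum_congr rfl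
    intro t _
    rw [pow_succ', Matrix.mulVec_mulVec]
  -- main induction
  have hF : ∀ T i, |S' T i - S T i| ≤ (T : ℝ) * (B * D) := by
    intro T
    induction T with
    | zero => intro i; simp [hSdef, hS'def]
    | succ T ih =>
      intro i
      have e1 : S' (T + 1) i - S (T + 1) i
          = (P' *ᵥ (fun j => S' T j - S T j)) i + ((P' - P) *ᵥ S T) i := by
        have h1 : S' (T + 1) = r + (P' *ᵥ S' T) := hrecP P' T
        have h2 : S (T + 1) = r + (P *ᵥ S T) := hrecP P T
        have h3 : (fun j => S' T j - S T j) = S' T - S T := rfl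
        rw [h1, h2, h3]
        simp only [Pi.add_apply, Pi.sub_apply, Matrix.mulVec_sub, Matrix.sub_mulVec]
        ring
      rw [e1]
      calc |(P' *ᵥ (fun j => S' T j - S T j)) i + ((P' - P) *ᵥ S T) i|
          ≤ |(P' *ᵥ (fun j => S' T j - S T j)) i| + |((P' - P) *ᵥ S T) i| := abs_add_le _ _
        _ ≤ (T : ℝ) * (B * D) + B * D := by
            gcongr
            · exact hcon _ _ (fun j => ih j) i
            · exact hstep T i
        _ = ((T + 1 : ℕ) : ℝ) * (B * D) := by push_cast; ring
  -- take limits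
  have ha : Filter.Tendsto (fun T : ℕ => (1 / (T : ℝ)) * S T i0) Filter.atTop (nhds g) :=
    tendsto_pi_nhds.mp hg i0
  have hb : Filter.Tendsto (fun T : ℕ => (1 / (T : ℝ)) * S' T i0) Filter.atTop (nhds g') :=
    tendsto_pi_nhds.mp hg' i0
  have hbound : ∀ᶠ T : ℕ in Filter.atTop,
      |(1 / (T : ℝ)) * S' T i0 - (1 / (T : ℝ)) * S T i0| ≤ B * D := by
    filter_upwards [Filter.eventually_ge_atTop 1] with T hT
    have hT0 : (0 : ℝ) < T := by exact_mod_cast hT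
    rw [← mul_sub, abs_mul, abs_of_nonneg (by positivity : (0:ℝ) ≤ 1 / (T:ℝ))]
    calc (1 / (T : ℝ)) * |S' T i0 - S T i0|
        ≤ (1 / (T : ℝ)) * ((T : ℝ) * (B * D)) := by
          gcongr
          exact hF T i0
      _ = B * D := by field_simp
  have hlim : Filter.Tendsto (fun T : ℕ =>
      |(1 / (T : ℝ)) * S' T i0 - (1 / (T : ℝ)) * S T i0|) Filter.atTop (nhds |g' - g|) :=
    (hb.sub ha).abs
  have hfin : |g' - g| ≤ B * D := le_of_tendsto hlim hbound
  rw [abs_sub_comm]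
  exact hfin
end

section
/- Let m ≥ 1 (the number of state-action-module triples) and let K ≥ 1. For each episode k ∈ {1,…,K} let v_k : Fin m → ℕ be the within-episode visit counts, set N_k(j) := ∑_{l<k} v_l(j), and let T := ∑_{k=1}^{K} ∑_{j} v_k(j) be the total number of steps, with T > m. Assume every episode is nonempty (∑_j v_k(j) ≥ 1) and every episode except possibly the last ends by the doubling criterion: for each k < K there exists j with v_k(j) ≥ max(1, N_k(j)). Then K ≤ m · log₂(8·T/m). -/
open Finset Real

/-- bound on the number of episodes of an episodic optimistic algorithm
whose episodes end by the doubling criterion. -/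
theorem stmt13 (m K : ℕ) (hm : 1 ≤ m) (hK : 1 ≤ K)
    (v : ℕ → Fin m → ℕ)
    (N : ℕ → Fin m → ℕ) (hN : ∀ k j, N k j = ∑ l ∈ Finset.range k, v l j)
    (T : ℕ) (hT : T = ∑ k ∈ Finset.range K, ∑ j, v k j) (hTm : m < T)
    (hne : ∀ k, k < K → 1 ≤ ∑ j, v k j)
    (hdouble : ∀ k, k + 1 < K → ∃ j, max 1 (N k j) ≤ v k j) :
    (K : ℝ) ≤ (m : ℝ) * Real.logb 2 (8 * T / m) := by
  classical
  set f : ℕ → Fin m := fun k => if h : k + 1 < K then (hdouble k h).choose else ⟨0, hm⟩ with hf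
  have hfspec : ∀ k, k + 1 < K → max 1 (N k (f k)) ≤ v k (f k) := by
    intro k h
    simp only [hf, dif_pos h]
    exact (hdouble k h).choose_spec
  set c : Fin m → ℕ := fun j => ((Finset.range (K-1)).filter (fun k => f k = j)).card with hc
  have hsumc : ∑ j, c j = K - 1 := by
    rw [← Finset.card_range (K-1)]
    exact (Finset.card_eq_sum_card_fiberwise (fun x _ => Finset.mem_univ (f x))).symm
  have Nsucc : ∀ n j, N (n+1) j = N n j + v n j := by
    intro n j; rw [hN, hN, Finset.sum_range_succ]
  have key : ∀ (j : Fin m) (n : ℕ),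
      (2:ℕ) ^ ((Finset.range n).filter (fun k => k + 1 < K ∧ f k = j)).card ≤ 2 * N n j + 1 := by
    intro j n
    suffices h : ((Finset.range n).filter (fun k => k + 1 < K ∧ f k = j)).card = 0 ∨
        2 ^ (((Finset.range n).filter (fun k => k + 1 < K ∧ f k = j)).card - 1) ≤ N n j by
      set g := ((Finset.range n).filter (fun k => k + 1 < K ∧ f k = j)).card with hg
      rcases h with h | h
      · rw [h]; omega
      · rcases Nat.eq_zero_or_pos g with h0 | h0
        · rw [h0]; omega
        · have : (2:ℕ) ^ g = 2 * 2 ^ (g - 1) := by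
            rw [← pow_succ']
            congr 1
            omega
          omega
    induction n with
    | zero => left; simp
    | succ n ih =>
      rw [Finset.range_add_one, Finset.filter_insert]
      by_cases hcond : n + 1 < K ∧ f n = j
      · rw [if_pos hcond, Finset.card_insert_of_notMem (by simp)]
        have hv := hfspec n hcond.1
        rw [hcond.2] at hv
        have hv1 : 1 ≤ v n j := le_trans (le_max_left _ _) hv
        have hvN : N n j ≤ v n j := le_trans (le_max_right _ _) hv
        right
        set g := ((Finset.range n).filter (fun k => k + 1 < K ∧ f k = j)).card with hg
        rcases ih with h0 | hge
        · rw [h0]; simp only [Nat.add_sub_cancel, pow_zero]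
          rw [Nsucc]; omega
        · rcases Nat.eq_zero_or_pos g with h0 | h0
          · rw [h0] at hge ⊢
            have hge' : 1 ≤ N n j := by simpa using hge
            have h00 : (2:ℕ) ^ (0 + 1 - 1) = 1 := rfl
            rw [h00, Nsucc]
            omega
          · have h2 : (2:ℕ) ^ (g + 1 - 1) = 2 * 2 ^ (g - 1) := by
              rw [← pow_succ']
              congr 1
              omega
            rw [h2, Nsucc]
            omega
      · rw [if_neg hcond]
        rcases ih with h0 | hge
        · left; exact h0
        · right
          have : N n j ≤ N (n+1) j := by rw [Nsucc]; omega
          exact le_trans hge this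
  have hbound : ∀ j, (2:ℕ) ^ c j ≤ 2 * N K j + 1 := by
    intro j
    have hcj : c j = ((Finset.range (K-1)).filter (fun k => k + 1 < K ∧ f k = j)).card := by
      apply congrArg Finset.card
      apply Finset.filter_congr
      intro k hk
      simp only [Finset.mem_range] at hk
      have : k + 1 < K := by omega
      simp [this]
    have hmono : N (K-1) j ≤ N K j := by
      rw [hN, hN]
      exact Finset.sum_le_sum_of_subset (Finset.range_subset_range.2 (Nat.sub_le K 1))
    calc (2:ℕ) ^ c j ≤ 2 * N (K-1) j + 1 := by rw [hcj]; exact key j (K-1)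
    _ ≤ 2 * N K j + 1 := by omega
  have hsumN : ∑ j, N K j = T := by
    simp only [hN, hT]
    rw [Finset.sum_comm]
  have hsum2 : ∑ j, (2:ℕ) ^ c j ≤ 3 * T := by
    calc ∑ j, (2:ℕ) ^ c j ≤ ∑ j : Fin m, (2 * N K j + 1) :=
          Finset.sum_le_sum (fun j _ => hbound j)
    _ = 2 * T + m := by
          rw [Finset.sum_add_distrib, ← Finset.mul_sum, hsumN]
          simp
    _ ≤ 3 * T := by omega
  -- real part
  have hmR : (0:ℝ) < m := by exact_mod_cast hm
  have hTR : (0:ℝ) < T := by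
    have : 0 < T := by omega
    exact_mod_cast this
  -- AM-GM
  have amgm := Real.geom_mean_le_arith_mean_weighted Finset.univ
      (fun _ : Fin m => 1 / (m:ℝ)) (fun j => (2:ℝ) ^ (c j))
      (fun i _ => by positivity)
      (by simp [Finset.card_univ]; field_simp)
      (fun i _ => by positivity)
  have hlhs : (∏ j : Fin m, ((2:ℝ) ^ (c j)) ^ ((1:ℝ) / m)) =
      (2:ℝ) ^ (((K:ℝ) - 1) / m) := by
    have : ∀ j : Fin m, ((2:ℝ) ^ (c j)) ^ ((1:ℝ) / m) = (2:ℝ) ^ ((c j : ℝ) * (1 / m)) := by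
      intro j
      rw [← Real.rpow_natCast 2 (c j), ← Real.rpow_mul (by norm_num)]
    rw [Finset.prod_congr rfl (fun j _ => this j), ← Real.rpow_sum_of_pos (by norm_num)]
    congr 1
    rw [← Finset.sum_mul]
    have : (∑ j : Fin m, (c j : ℝ)) = ((K:ℝ) - 1) := by
      rw [← Nat.cast_sum]
      rw [hsumc]
      have : ((K - 1 : ℕ) : ℝ) = (K:ℝ) - 1 := by
        have := Nat.cast_sub hK (R := ℝ)
        simpa using this
      rw [this]
    rw [this, mul_one_div]
  have hrhs : (∑ j : Fin m, (1 / (m:ℝ)) * (2:ℝ) ^ (c j)) ≤ 3 * T / m := by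
    rw [← Finset.mul_sum]
    have hs : (∑ j : Fin m, (2:ℝ) ^ (c j)) ≤ 3 * T := by
      calc (∑ j : Fin m, (2:ℝ) ^ (c j)) = ((∑ j, (2:ℕ) ^ c j : ℕ) : ℝ) := by
            push_cast; ring_nf
      _ ≤ ((3 * T : ℕ) : ℝ) := by exact_mod_cast hsum2
      _ = 3 * T := by push_cast; ring
    calc (1 / (m:ℝ)) * ∑ j : Fin m, (2:ℝ) ^ (c j) ≤ (1 / (m:ℝ)) * (3 * T) :=
          mul_le_mul_of_nonneg_left hs (by positivity)
    _ = 3 * T / m := by ring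
  have hmain : (2:ℝ) ^ (((K:ℝ) - 1) / m) ≤ 3 * T / m := by
    rw [← hlhs]; exact le_trans amgm hrhs
  -- take logb
  have hlog : ((K:ℝ) - 1) / m ≤ Real.logb 2 (3 * T / m) := by
    have := Real.logb_le_logb_of_le (b := 2) (by norm_num)
        (Real.rpow_pos_of_pos (by norm_num) _) hmain
    rwa [Real.logb_rpow (by norm_num) (by norm_num)] at this
  have hK1 : (K:ℝ) ≤ m * Real.logb 2 (3 * T / m) + 1 := by
    have := (div_le_iff₀ hmR).mp hlog
    linarith
  have hfin : (m:ℝ) * Real.logb 2 (3 * T / m) + 1 ≤ m * Real.logb 2 (8 * T / m) := by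
    have h1 : Real.logb 2 (8 * T / m) = 1 + Real.logb 2 (4 * T / m) := by
      have h4 : (0:ℝ) < 4 * T / m := by positivity
      have : (8:ℝ) * T / m = 2 * (4 * T / m) := by ring
      rw [this, Real.logb_mul (by norm_num) (by positivity), Real.logb_self_eq_one (by norm_num)]
    have h2 : Real.logb 2 (3 * T / m) ≤ Real.logb 2 (4 * T / m) := by
      apply Real.logb_le_logb_of_le (by norm_num) (by positivity)
      gcongr <;> norm_num
    have hm1 : (1:ℝ) ≤ m := by exact_mod_cast hm
    have h3 : (m:ℝ) * Real.logb 2 (3 * T / m) ≤ m * Real.logb 2 (4 * T / m) :=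
      mul_le_mul_of_nonneg_left h2 (le_of_lt hmR)
    rw [h1]
    nlinarith
  linarith
end

section
/- Let λ > 0, let μ : ℕ₊ → ℝ be positive and nondecreasing with μ(i₀) > λ for some i₀ ≥ 1, let U ≥ μ(1), δ_max > 0, and S ∈ ℕ. Set C₁ := ∏_{i=1}^{i₀−1} μ(i₀)/μ(i), m(0) := (∑_{s'=0}^{S} ∏_{i=1}^{s'} λ/μ(i))^{-1}, m(s) := m(0)·∏_{i=1}^{s} λ/μ(i), and Δ(s) := 2·δ_max·m(0)^{-1}·∑_{i=1}^{s} U/μ(i). Then ∑_{s=0}^{S} (Δ(s+1) + δ_max)·√(m(s)) ≤ 3·δ_max·(U/μ(1))·C₁·(1 − √(λ/μ(i₀)))^{-3}. -/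
/-!
Write `w(s) = ∏_{i ≤ s} λ/μ(i)` for the unnormalised stationary weights. Since `μ` is
nondecreasing, the factors `μ(i₀)/μ(i)` are `≥ 1` before `i₀` and `≤ 1` after it, so their partial
products never exceed `C₁` and `w(s) ≤ C₁ ρ^s` with `ρ = λ/μ(i₀) < 1`. With `r = √ρ` this gives
`√(m(s)) ≤ √C₁ r^s / √(m(0)⁻¹)` and `m(0)⁻¹ ≤ C₁ (1 - r)⁻²`, while
`Δ(s+1) + δ_max ≤ 3 δ_max (U/μ(1)) (s+1) m(0)⁻¹`. Each summand is therefore at most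
`3 δ_max (U/μ(1)) C₁ (1 - r)⁻¹ · (s+1) r^s`, and `∑ (s+1) r^s ≤ (1 - r)⁻²`.
-/

open Finset Real

lemma prod_Icc_le_prod_Icc_of_one_le_of_le_one {f : ℕ → ℝ} {N : ℕ}
    (hle : ∀ i, 1 ≤ i → i ≤ N → 1 ≤ f i) (hge : ∀ i, N < i → 0 ≤ f i ∧ f i ≤ 1) (n : ℕ) :
    ∏ i ∈ Icc 1 n, f i ≤ ∏ i ∈ Icc 1 N, f i := by
  have hf : ∀ i, 1 ≤ i → 0 ≤ f i := fun i hi ↦ by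
    rcases le_or_gt i N with h | h
    exacts [zero_le_one.trans (hle i hi h), (hge i h).1]
  have hprod : ∀ k, 0 ≤ ∏ i ∈ Ioc 0 k, f i := fun k ↦
    prod_nonneg fun i hi ↦ hf i (mem_Ioc.1 hi).1
  rw [← Nat.zero_add 1, Icc_add_one_left_eq_Ioc, Icc_add_one_left_eq_Ioc]
  rcases le_total n N with h | h
  · rw [← prod_Ioc_consecutive f (Nat.zero_le n) h]
    exact le_mul_of_one_le_right (hprod n)
      (one_le_prod fun i hi ↦ hle i (by simp at hi; omega) (mem_Ioc.1 hi).2)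
  · rw [← prod_Ioc_consecutive f (Nat.zero_le N) h]
    exact mul_le_of_le_one_right (hprod N)
      (prod_le_one (fun i hi ↦ (hge i (mem_Ioc.1 hi).1).1) fun i hi ↦ (hge i (mem_Ioc.1 hi).1).2)

lemma sqrt_div_lt_one {a b : ℝ} (hb : 0 < b) (hab : a < b) : √(a / b) < 1 :=
  (sqrt_lt' one_pos).2 (by rw [one_pow]; exact (div_lt_one hb).2 hab)

lemma add_mul_sqrt_div_le {D δ M w c : ℝ} (hδ : 0 ≤ δ) (hM : 1 ≤ M) (hc : 1 ≤ c)
    (hD : D ≤ 2 * δ * M * c) : (D + δ) * √(w / M) ≤ 3 * δ * c * √M * √w := by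
  have hδMc : δ ≤ δ * M * c := by nlinarith [mul_nonneg hδ (by nlinarith : (0:ℝ) ≤ M * c - 1)]
  calc (D + δ) * √(w / M) ≤ 3 * δ * M * c * (√w / √M) := by
        rw [sqrt_div' w (by linarith)]
        gcongr
        linarith
    _ = 3 * δ * c * (M / √M) * √w := by ring
    _ = 3 * δ * c * √M * √w := by rw [div_sqrt]

section BirthDeath

variable {μ : ℕ → ℝ}

lemma pos_of_monotoneOn_Ici_one (hμ : MonotoneOn μ (Set.Ici 1)) (hμ1 : 0 < μ 1) {i : ℕ}
    (hi : 1 ≤ i) : 0 < μ i :=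
  hμ1.trans_le (hμ Set.self_mem_Ici hi hi)

lemma prod_Icc_div_le_prod_Icc_pred (hμ : MonotoneOn μ (Set.Ici 1)) (hμ1 : 0 < μ 1) {i₀ : ℕ}
    (hi₀ : 1 ≤ i₀) (n : ℕ) :
    ∏ i ∈ Icc 1 n, μ i₀ / μ i ≤ ∏ i ∈ Icc 1 (i₀ - 1), μ i₀ / μ i := by
  refine prod_Icc_le_prod_Icc_of_one_le_of_le_one (fun i hi hin ↦ ?_) (fun i hi ↦ ?_) n
  · exact (one_le_div (pos_of_monotoneOn_Ici_one hμ hμ1 hi)).2 (hμ hi hi₀ (by omega))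
  · have hμi := pos_of_monotoneOn_Ici_one hμ hμ1 (hi₀.trans (by omega : i₀ ≤ i))
    exact ⟨div_nonneg (pos_of_monotoneOn_Ici_one hμ hμ1 hi₀).le hμi.le,
      (div_le_one hμi).2 (hμ hi₀ (hi₀.trans (by omega)) (by omega))⟩

lemma one_le_prod_Icc_div (hμ : MonotoneOn μ (Set.Ici 1)) (hμ1 : 0 < μ 1) {i₀ : ℕ}
    (hi₀ : 1 ≤ i₀) : 1 ≤ ∏ i ∈ Icc 1 (i₀ - 1), μ i₀ / μ i := by
  simpa using prod_Icc_div_le_prod_Icc_pred hμ hμ1 hi₀ 0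

lemma sum_Icc_div_le (hμ : MonotoneOn μ (Set.Ici 1)) (hμ1 : 0 < μ 1) {U : ℝ} (hU : 0 ≤ U)
    (n : ℕ) : ∑ i ∈ Icc 1 n, U / μ i ≤ n * (U / μ 1) := by
  simpa using sum_le_card_nsmul (Icc 1 n) _ (U / μ 1) fun i hi ↦
    div_le_div_of_nonneg_left hU hμ1 (hμ Set.self_mem_Ici (mem_Icc.1 hi).1 (mem_Icc.1 hi).1)

variable {lam : ℝ}

/-- The stationary distribution of the chain on `{0, …, S}` is `m(s) = w(s) / ∑_{s' ≤ S} w(s')`. -/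
noncomputable def stationaryWeight (lam : ℝ) (μ : ℕ → ℝ) (s : ℕ) : ℝ := ∏ i ∈ Icc 1 s, lam / μ i

@[simp]
lemma stationaryWeight_zero : stationaryWeight lam μ 0 = 1 := by simp [stationaryWeight]

lemma stationaryWeight_nonneg (hμ : MonotoneOn μ (Set.Ici 1)) (hμ1 : 0 < μ 1) (hlam : 0 ≤ lam)
    (s : ℕ) : 0 ≤ stationaryWeight lam μ s :=
  prod_nonneg fun _ hi ↦ div_nonneg hlam (pos_of_monotoneOn_Ici_one hμ hμ1 (mem_Icc.1 hi).1).le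

lemma stationaryWeight_le_mul_pow (hμ : MonotoneOn μ (Set.Ici 1)) (hμ1 : 0 < μ 1) {i₀ : ℕ}
    (hi₀ : 1 ≤ i₀) (hlam : 0 ≤ lam) (s : ℕ) :
    stationaryWeight lam μ s ≤ (∏ i ∈ Icc 1 (i₀ - 1), μ i₀ / μ i) * (lam / μ i₀) ^ s := by
  have hμi₀ := pos_of_monotoneOn_Ici_one hμ hμ1 hi₀
  calc stationaryWeight lam μ s = ∏ i ∈ Icc 1 s, lam / μ i₀ * (μ i₀ / μ i) :=
        prod_congr rfl fun i _ ↦ (div_mul_div_cancel₀ hμi₀.ne').symm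
    _ = (∏ i ∈ Icc 1 s, μ i₀ / μ i) * (lam / μ i₀) ^ s := by
        rw [prod_mul_distrib, prod_const, Nat.card_Icc, Nat.add_sub_cancel, mul_comm]
    _ ≤ _ := mul_le_mul_of_nonneg_right (prod_Icc_div_le_prod_Icc_pred hμ hμ1 hi₀ s)
        (pow_nonneg (div_nonneg hlam hμi₀.le) s)

lemma sqrt_stationaryWeight_le (hμ : MonotoneOn μ (Set.Ici 1)) (hμ1 : 0 < μ 1) {i₀ : ℕ}
    (hi₀ : 1 ≤ i₀) (hlam : 0 ≤ lam) (s : ℕ) :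
    √(stationaryWeight lam μ s) ≤ √(∏ i ∈ Icc 1 (i₀ - 1), μ i₀ / μ i) * √(lam / μ i₀) ^ s := by
  have hρ : 0 ≤ lam / μ i₀ := div_nonneg hlam (pos_of_monotoneOn_Ici_one hμ hμ1 hi₀).le
  have hpow : √((lam / μ i₀) ^ s) = √(lam / μ i₀) ^ s := by
    rw [← sqrt_sq (pow_nonneg (sqrt_nonneg _) s), pow_right_comm, sq_sqrt hρ]
  rw [← hpow, ← sqrt_mul (zero_le_one.trans (one_le_prod_Icc_div hμ hμ1 hi₀))]
  exact sqrt_le_sqrt (stationaryWeight_le_mul_pow hμ hμ1 hi₀ hlam s)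

lemma one_le_sum_stationaryWeight (hμ : MonotoneOn μ (Set.Ici 1)) (hμ1 : 0 < μ 1)
    (hlam : 0 ≤ lam) (S : ℕ) : 1 ≤ ∑ s ∈ range (S + 1), stationaryWeight lam μ s :=
  stationaryWeight_zero (lam := lam) (μ := μ) ▸
    single_le_sum (fun s _ ↦ stationaryWeight_nonneg hμ hμ1 hlam s) (mem_range.2 S.succ_pos)

lemma sum_stationaryWeight_le (hμ : MonotoneOn μ (Set.Ici 1)) (hμ1 : 0 < μ 1) {i₀ : ℕ}
    (hi₀ : 1 ≤ i₀) (hlam : 0 ≤ lam) (hstab : lam < μ i₀) (n : ℕ) :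
    ∑ s ∈ range n, stationaryWeight lam μ s ≤
      (∏ i ∈ Icc 1 (i₀ - 1), μ i₀ / μ i) * (1 - √(lam / μ i₀))⁻¹ ^ 2 := by
  have hμi₀ := pos_of_monotoneOn_Ici_one hμ hμ1 hi₀
  have hC := zero_le_one.trans (one_le_prod_Icc_div hμ hμ1 hi₀)
  set r := √(lam / μ i₀)
  have hr0 : 0 ≤ r := sqrt_nonneg _
  have hr : r ^ 2 = lam / μ i₀ := sq_sqrt (div_nonneg hlam hμi₀.le)
  have hr1 : r < 1 := sqrt_div_lt_one hμi₀ hstab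
  calc ∑ s ∈ range n, stationaryWeight lam μ s
      ≤ ∑ s ∈ range n, (∏ i ∈ Icc 1 (i₀ - 1), μ i₀ / μ i) * (r ^ 2) ^ s :=
        sum_le_sum fun s _ ↦ hr ▸ stationaryWeight_le_mul_pow hμ hμ1 hi₀ hlam s
    _ ≤ (∏ i ∈ Icc 1 (i₀ - 1), μ i₀ / μ i) * (1 - r ^ 2)⁻¹ := by
        rw [← mul_sum, range_eq_Ico]
        gcongr
        simpa using geom_sum_Ico_le_of_lt_one (m := 0) (sq_nonneg r) (by nlinarith)
    _ ≤ _ := by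
        rw [inv_pow]
        gcongr
        nlinarith

lemma bias_add_mul_sqrt_stationary_le (hμ : MonotoneOn μ (Set.Ici 1)) (hμ1 : 0 < μ 1) {i₀ : ℕ}
    (hi₀ : 1 ≤ i₀) (hlam : 0 ≤ lam) {U δ M : ℝ} (hU : μ 1 ≤ U) (hδ : 0 ≤ δ) (hM : 1 ≤ M)
    (s : ℕ) :
    (2 * δ * M * ∑ i ∈ Icc 1 (s + 1), U / μ i + δ) * √(stationaryWeight lam μ s / M) ≤
      3 * δ * (U / μ 1) * √M * √(∏ i ∈ Icc 1 (i₀ - 1), μ i₀ / μ i) *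
        ((s + 1) * √(lam / μ i₀) ^ s) := by
  have hD : 2 * δ * M * ∑ i ∈ Icc 1 (s + 1), U / μ i ≤ 2 * δ * M * ((s + 1) * (U / μ 1)) := by
    have : 0 ≤ M := by linarith
    gcongr
    exact_mod_cast sum_Icc_div_le hμ hμ1 (hμ1.le.trans hU) (s + 1)
  have hc : 1 ≤ (s + 1 : ℝ) * (U / μ 1) :=
    one_le_mul_of_one_le_of_one_le (by simp) ((one_le_div hμ1).2 hU)
  calc _ ≤ 3 * δ * ((s + 1) * (U / μ 1)) * √M * √(stationaryWeight lam μ s) :=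
        add_mul_sqrt_div_le hδ hM hc hD
    _ ≤ 3 * δ * ((s + 1) * (U / μ 1)) * √M *
          (√(∏ i ∈ Icc 1 (i₀ - 1), μ i₀ / μ i) * √(lam / μ i₀) ^ s) := by
        gcongr
        exact sqrt_stationaryWeight_le hμ hμ1 hi₀ hlam s
    _ = _ := by ring

end BirthDeath

lemma sum_range_add_one_mul_pow_le {r : ℝ} (hr0 : 0 ≤ r) (hr1 : r < 1) (n : ℕ) :
    ∑ s ∈ range n, ((s : ℝ) + 1) * r ^ s ≤ (1 - r)⁻¹ ^ 2 := by
  have h := hasSum_choose_mul_geometric_of_norm_lt_one 1 (by rwa [norm_of_nonneg hr0])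
  simp only [Nat.choose_one_right, Nat.cast_add, Nat.cast_one, one_div, ← inv_pow] at h
  exact sum_le_hasSum _ (fun s _ ↦ by positivity) h

/-- the weighted sum of bias variations against the square root of the
stationary distribution is bounded independently of the capacity `S`. -/
theorem stmt14 (lam : ℝ) (hlam : 0 < lam) (μ : ℕ → ℝ)
    (hpos : 0 < μ 1) (hmono : ∀ i, 1 ≤ i → μ i ≤ μ (i + 1))
    (i₀ : ℕ) (hi₀ : 1 ≤ i₀) (hstab : lam < μ i₀)
    (U δmax : ℝ) (hU : μ 1 ≤ U) (hδ : 0 < δmax) (S : ℕ)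
    (C₁ : ℝ) (hC₁ : C₁ = ∏ i ∈ Finset.Icc 1 (i₀ - 1), μ i₀ / μ i)
    (m0inv : ℝ)
    (hm0inv : m0inv = ∑ s' ∈ Finset.range (S + 1), ∏ i ∈ Finset.Icc 1 s', lam / μ i)
    (msm : ℕ → ℝ) (hmsm : ∀ s, msm s = (∏ i ∈ Finset.Icc 1 s, lam / μ i) / m0inv)
    (Δ : ℕ → ℝ) (hΔ : ∀ s, Δ s = 2 * δmax * m0inv * ∑ i ∈ Finset.Icc 1 s, U / μ i) :
    ∑ s ∈ Finset.range (S + 1), (Δ (s + 1) + δmax) * Real.sqrt (msm s) ≤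
      3 * δmax * (U / μ 1) * C₁ * ((1 - Real.sqrt (lam / μ i₀))⁻¹) ^ 3 := by
  have hμ : MonotoneOn μ (Set.Ici 1) := monotoneOn_nat_Ici_of_le_succ hmono
  set r := √(lam / μ i₀)
  have hr1 : r < 1 := sqrt_div_lt_one (pos_of_monotoneOn_Ici_one hμ hpos hi₀) hstab
  have ha : 0 ≤ U / μ 1 := div_nonneg (hpos.le.trans hU) hpos.le
  have hC₁1 : 1 ≤ C₁ := hC₁ ▸ one_le_prod_Icc_div hμ hpos hi₀
  have hM1 : 1 ≤ m0inv := hm0inv ▸ one_le_sum_stationaryWeight hμ hpos hlam.le S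
  have hM : √m0inv ≤ √C₁ * (1 - r)⁻¹ := by
    rw [← sqrt_sq (inv_nonneg.2 (sub_pos.2 hr1).le), ← sqrt_mul (by linarith)]
    exact sqrt_le_sqrt (hm0inv ▸ hC₁ ▸ sum_stationaryWeight_le hμ hpos hi₀ hlam.le hstab _)
  have hterm (s : ℕ) : (Δ (s + 1) + δmax) * √(msm s) ≤
      3 * δmax * (U / μ 1) * √m0inv * √C₁ * ((s + 1) * r ^ s) := by
    rw [hΔ, hmsm, hC₁]
    exact bias_add_mul_sqrt_stationary_le hμ hpos hi₀ hlam.le hU hδ.le hM1 s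
  calc _ ≤ ∑ s ∈ range (S + 1), 3 * δmax * (U / μ 1) * √m0inv * √C₁ * ((s + 1) * r ^ s) :=
        sum_le_sum fun s _ ↦ hterm s
    _ = 3 * δmax * (U / μ 1) * √m0inv * √C₁ * ∑ s ∈ range (S + 1), ((s : ℝ) + 1) * r ^ s :=
        (mul_sum ..).symm
    _ ≤ 3 * δmax * (U / μ 1) * (√C₁ * (1 - r)⁻¹) * √C₁ * (1 - r)⁻¹ ^ 2 := by
        gcongr
        exact sum_range_add_one_mul_pow_le (sqrt_nonneg _) hr1 _
    _ = 3 * δmax * (U / μ 1) * (√C₁ * √C₁) * (1 - r)⁻¹ ^ 3 := by ring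
    _ = _ := by rw [mul_self_sqrt (by linarith)]
end
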